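/- arXiv:math/9305202 — 4 statements merged into one kernel-verified Lean document; each statement's English description precedes it below -/
import Mathlib

section
/- Under the Continuum Hypothesis, any two η₁-ordered sets of cardinality continuum are order-isomorphic. -/
open Cardinal

/-- An `η₁`-set: for any countable subsets `A`, `B` with every element of `A`
below every element of `B`, there is an element strictly between them. -/
def IsEtaOne (L : Type*) [LinearOrder L] : Prop :=
  ∀ A B : Set L, A.Countable → B.Countable → (∀ a ∈ A, ∀ b ∈ B, a < b) →
    ∃ x, (∀ a ∈ A, a < x) ∧ (∀ b ∈ B, x < b)

namespace EtaOneAux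

open Set

variable {L M : Type*} [LinearOrder L] [LinearOrder M]

/-- A set of pairs is "good" if it is the graph of a partial order isomorphism. -/
def Good (t : Set (L × M)) : Prop :=
  ∀ p ∈ t, ∀ q ∈ t, (p.1 < q.1 ↔ p.2 < q.2)

theorem Good.eq_iff {t : Set (L × M)} (ht : Good t) {p q : L × M} (hp : p ∈ t) (hq : q ∈ t) :
    p.1 = q.1 ↔ p.2 = q.2 := by
  constructor
  · intro h
    rcases lt_trichotomy p.2 q.2 with h' | h' | h'
    · exact absurd ((ht p hp q hq).2 h') (h ▸ lt_irrefl _)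
    · exact h'
    · exact absurd ((ht q hq p hp).2 h') (h ▸ lt_irrefl _)
  · intro h
    rcases lt_trichotomy p.1 q.1 with h' | h' | h'
    · exact absurd ((ht p hp q hq).1 h') (h ▸ lt_irrefl _)
    · exact h'
    · exact absurd ((ht q hq p hp).1 h') (h ▸ lt_irrefl _)

theorem exists_insert_good (hM : IsEtaOne M) {t : Set (L × M)} (ht : Good t)
    (hc : t.Countable) (x : L) : ∃ y, Good (insert (x, y) t) := by
  by_cases hx : ∃ p ∈ t, p.1 = x
  · obtain ⟨p, hp, hpx⟩ := hx
    refine ⟨p.2, ?_⟩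
    have hins : insert (x, p.2) t = t := by
      rw [Set.insert_eq_self]
      rw [← hpx]
      simpa using hp
    rw [hins]
    exact ht
  · set A : Set M := (fun p : L × M => p.2) '' {p ∈ t | p.1 < x} with hA
    set B : Set M := (fun p : L × M => p.2) '' {p ∈ t | x < p.1} with hB
    have hAc : A.Countable := (hc.mono (sep_subset _ _)).image _
    have hBc : B.Countable := (hc.mono (sep_subset _ _)).image _
    have hAB : ∀ a ∈ A, ∀ b ∈ B, a < b := by
      rintro a ⟨p, ⟨hp, hpx⟩, rfl⟩ b ⟨q, ⟨hq, hqx⟩, rfl⟩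
      exact (ht p hp q hq).1 (hpx.trans hqx)
    obtain ⟨y, hyA, hyB⟩ := hM A B hAc hBc hAB
    refine ⟨y, ?_⟩
    intro p hp q hq
    rcases hp with hp | hp <;> rcases hq with hq | hq
    · subst hp; subst hq; simp
    · subst hp
      constructor
      · intro h
        exact hyB _ ⟨q, ⟨hq, h⟩, rfl⟩
      · intro h
        rcases lt_trichotomy x q.1 with h' | h' | h'
        · exact h'
        · exact absurd ⟨q, hq, h'.symm⟩ hx
        · exact absurd h (not_lt.2 (le_of_lt (hyA _ ⟨q, ⟨hq, h'⟩, rfl⟩)))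
    · subst hq
      constructor
      · intro h
        exact hyA _ ⟨p, ⟨hp, h⟩, rfl⟩
      · intro h
        rcases lt_trichotomy p.1 x with h' | h' | h'
        · exact h'
        · exact absurd ⟨p, hp, h'⟩ hx
        · exact absurd h (not_lt.2 (le_of_lt (hyB _ ⟨p, ⟨hp, h'⟩, rfl⟩)))
    · exact ht p hp q hq

theorem exists_insert_good' (hL : IsEtaOne L) {t : Set (L × M)} (ht : Good t)
    (hc : t.Countable) (y : M) : ∃ x, Good (insert (x, y) t) := by
  have hts : Good (Prod.swap '' t) := by
    rintro p ⟨p', hp', rfl⟩ q ⟨q', hq', rfl⟩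
    exact (ht p' hp' q' hq').symm
  obtain ⟨x, hx⟩ := exists_insert_good hL hts (hc.image _) y
  refine ⟨x, fun p hp q hq => ?_⟩
  have hmem : ∀ r : L × M, r ∈ insert (x, y) t →
      r.swap ∈ insert (y, x) (Prod.swap '' t) := by
    rintro r (rfl | hr)
    · exact mem_insert _ _
    · exact mem_insert_of_mem _ ⟨r, hr, rfl⟩
  exact (hx p.swap (hmem p hp) q.swap (hmem q hq)).symm

open scoped Classical in
/-- Extend a good set to include `x` in its domain. -/
noncomputable def extL (t : Set (L × M)) (x : L) : Set (L × M) :=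
  if h : ∃ y, Good (insert (x, y) t) then insert (x, h.choose) t else t

open scoped Classical in
/-- Extend a good set to include `y` in its range. -/
noncomputable def extR (t : Set (L × M)) (y : M) : Set (L × M) :=
  if h : ∃ x, Good (insert (x, y) t) then insert (h.choose, y) t else t

open scoped Classical in
theorem subset_extL (t : Set (L × M)) (x : L) : t ⊆ extL t x := by
  rw [extL]; split
  · exact subset_insert _ _
  · exact subset_rfl

open scoped Classical in
theorem subset_extR (t : Set (L × M)) (y : M) : t ⊆ extR t y := by
  rw [extR]; split
  · exact subset_insert _ _
  · exact subset_rfl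

open scoped Classical in
theorem extL_spec (hM : IsEtaOne M) {t : Set (L × M)} (ht : Good t) (hc : t.Countable)
    (x : L) : Good (extL t x) ∧ (extL t x).Countable ∧ ∃ y, (x, y) ∈ extL t x := by
  have h := exists_insert_good hM ht hc x
  rw [extL, dif_pos h]
  exact ⟨h.choose_spec, hc.insert _, h.choose, mem_insert _ _⟩

open scoped Classical in
theorem extR_spec (hL : IsEtaOne L) {t : Set (L × M)} (ht : Good t) (hc : t.Countable)
    (y : M) : Good (extR t y) ∧ (extR t y).Countable ∧ ∃ x, (x, y) ∈ extR t y := by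
  have h := exists_insert_good' hL ht hc y
  rw [extR, dif_pos h]
  exact ⟨h.choose_spec, hc.insert _, h.choose, mem_insert _ _⟩

variable {O : Type*} [LinearOrder O] [WellFoundedLT O]

/-- The transfinite back-and-forth construction. -/
noncomputable def famS (eL : O → L) (eM : O → M) : O → Set (L × M) :=
  (wellFounded_lt (α := O)).fix fun o ih =>
    extR (extL (⋃ o' : Set.Iio o, ih o' o'.2) (eL o)) (eM o)

theorem famS_eq (eL : O → L) (eM : O → M) (o : O) :
    famS eL eM o =
      extR (extL (⋃ o' : Set.Iio o, famS eL eM o') (eL o)) (eM o) :=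
  WellFounded.fix_eq _ _ _

theorem famS_mono (eL : O → L) (eM : O → M) {o' o : O} (h : o' ≤ o) :
    famS eL eM o' ⊆ famS eL eM o := by
  rcases eq_or_lt_of_le h with rfl | h
  · exact subset_rfl
  · rw [famS_eq eL eM o]
    exact (Set.subset_iUnion (fun o'' : Set.Iio o => famS eL eM o'') ⟨o', h⟩).trans
      ((subset_extL _ _).trans (subset_extR _ _))

theorem famS_good (hL : IsEtaOne L) (hM : IsEtaOne M)
    (hcnt : ∀ o : O, (Set.Iio o).Countable) (eL : O → L) (eM : O → M) (o : O) :
    Good (famS eL eM o) ∧ (famS eL eM o).Countable ∧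
      (∃ y, (eL o, y) ∈ famS eL eM o) ∧ (∃ x, (x, eM o) ∈ famS eL eM o) := by
  refine (wellFounded_lt (α := O)).induction (C := fun o : O =>
    Good (famS eL eM o) ∧ (famS eL eM o).Countable ∧
      (∃ y, (eL o, y) ∈ famS eL eM o) ∧ (∃ x, (x, eM o) ∈ famS eL eM o)) o ?_
  intro o ih
  set U := ⋃ o' : Set.Iio o, famS eL eM o' with hU
  have hUc : U.Countable := by
    have := (hcnt o).to_subtype
    exact Set.countable_iUnion fun o' => (ih o' o'.2).2.1
  have hUgood : Good U := by
    intro p hp q hq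
    obtain ⟨a, hpa⟩ := Set.mem_iUnion.1 hp
    obtain ⟨b, hqb⟩ := Set.mem_iUnion.1 hq
    rcases le_total a.1 b.1 with h | h
    · exact (ih b b.2).1 p (famS_mono eL eM h hpa) q hqb
    · exact (ih a a.2).1 p hpa q (famS_mono eL eM h hqb)
  obtain ⟨hTgood, hTc, y, hy⟩ := extL_spec hM hUgood hUc (eL o)
  obtain ⟨hSgood, hSc, x, hx⟩ := extR_spec hL hTgood hTc (eM o)
  rw [famS_eq eL eM o]
  exact ⟨hSgood, hSc, ⟨y, subset_extR _ _ hy⟩, ⟨x, hx⟩⟩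

theorem continuum_eq_aleph_one_of_CH.{w, u}
    (CH : Cardinal.continuum.{w} = Cardinal.aleph 1) :
    Cardinal.continuum.{u} = Cardinal.aleph 1 := by
  have h := congrArg Cardinal.lift.{u, w} CH
  rw [Cardinal.lift_continuum, Cardinal.lift_aleph, Ordinal.lift_one] at h
  apply Cardinal.lift_injective.{w, u}
  rw [Cardinal.lift_continuum, Cardinal.lift_aleph, Ordinal.lift_one]
  exact h

end EtaOneAux

open EtaOneAux

/-- Hausdorff: under CH, any two `η₁`-sets of cardinality continuum are
order-isomorphic. -/
theorem etaOne_orderIso_of_CH (CH : Cardinal.continuum = Cardinal.aleph 1)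
    (L M : Type*) [LinearOrder L] [LinearOrder M]
    (hL : IsEtaOne L) (hM : IsEtaOne M)
    (hcL : #L = Cardinal.continuum) (hcM : #M = Cardinal.continuum) :
    Nonempty (L ≃o M) := by
  classical
  have hcL' : #L = Cardinal.aleph 1 := hcL.trans (continuum_eq_aleph_one_of_CH CH)
  have hcM' : #M = Cardinal.aleph 1 := hcM.trans (continuum_eq_aleph_one_of_CH CH)
  set O := (#L).ord.ToType with hO
  have hOcard : #O = Cardinal.aleph 1 :=
    (Cardinal.mk_toType _).trans ((Cardinal.card_ord _).trans hcL')
  have hcnt : ∀ o : O, (Set.Iio o).Countable := fun o =>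
    (Cardinal.countable_iff_lt_aleph_one _).2
      ((Cardinal.mk_Iio_ord_toType o).trans_le hcL'.le)
  obtain ⟨eL⟩ : Nonempty (O ≃ L) :=
    Cardinal.eq.1 (hOcard.trans hcL'.symm)
  obtain ⟨eM⟩ : Nonempty (O ≃ M) := by
    rw [← Cardinal.lift_mk_eq', hOcard, hcM']
    simp [Cardinal.lift_aleph, Ordinal.lift_one]
  set S : Set (L × M) := ⋃ o : O, famS (L := L) (M := M) (⇑eL) (⇑eM) o with hS
  have hspec := famS_good hL hM hcnt (⇑eL) (⇑eM)
  have hSgood : Good S := by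
    intro p hp q hq
    obtain ⟨a, hpa⟩ := Set.mem_iUnion.1 hp
    obtain ⟨b, hqb⟩ := Set.mem_iUnion.1 hq
    rcases le_total a b with h | h
    · exact (hspec b).1 p (famS_mono _ _ h hpa) q hqb
    · exact (hspec a).1 p hpa q (famS_mono _ _ h hqb)
  have htotal : ∀ x : L, ∃ y : M, (x, y) ∈ S := by
    intro x
    obtain ⟨y, hy⟩ := (hspec (eL.symm x)).2.2.1
    rw [eL.apply_symm_apply] at hy
    exact ⟨y, Set.mem_iUnion.2 ⟨eL.symm x, hy⟩⟩
  have hrange : ∀ y : M, ∃ x : L, (x, y) ∈ S := by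
    intro y
    obtain ⟨x, hx⟩ := (hspec (eM.symm y)).2.2.2
    rw [eM.apply_symm_apply] at hx
    exact ⟨x, Set.mem_iUnion.2 ⟨eM.symm y, hx⟩⟩
  let f : L → M := fun x => (htotal x).choose
  have hf : ∀ x, (x, f x) ∈ S := fun x => (htotal x).choose_spec
  have hmono : StrictMono f := fun a b hab => (hSgood _ (hf a) _ (hf b)).1 hab
  have hsurj : Function.Surjective f := by
    intro y
    obtain ⟨x, hx⟩ := hrange y
    exact ⟨x, (hSgood.eq_iff (hf x) hx).1 rfl⟩
  exact ⟨StrictMono.orderIsoOfSurjective f hmono hsurj⟩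
end

section
/- If L is a dense linear order without endpoints that is an η₁-set, then L is countably saturated as a model of the theory of dense linear orders without endpoints. -/
open FirstOrder

/-- A structure is countably saturated if every countable, finitely satisfiable
set of formulas in one free variable over countably many parameters is realized. -/
def CountablySaturated (L : FirstOrder.Language) (M : Type*) [L.Structure M] : Prop :=
  ∀ (p : ℕ → M) (T : Set (L.Formula (ℕ ⊕ Fin 1))), T.Countable →
    (∀ s : Finset (L.Formula (ℕ ⊕ Fin 1)), ↑s ⊆ T →
      ∃ x : M, ∀ φ ∈ s, φ.Realize (Sum.elim p fun _ => x)) →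
    ∃ x : M, ∀ φ ∈ T, φ.Realize (Sum.elim p fun _ => x)

/-!
A finitely satisfiable type `T` over parameters `p` extends to an ultrafilter `U` in which
every formula of `T` holds almost everywhere. `U` determines a cut in the countable set of
parameters, and the η₁ property realizes it by some `x`. In a dense linear order the truth of a
formula depends only on the order type of its (finitely many) arguments: pass to a countable
elementary substructure, which is ultrahomogeneous by Fraïssé theory. Each formula of `T` holds
at some `y` lying in the same cut as `x` over the parameters the formula mentions, hence at `x`.
-/

open Filter

namespace Ultrafilter

theorem exists_forall_eventually {ι α : Type*} (P : ι → α → Prop)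
    (h : ∀ s : Finset ι, ∃ x, ∀ i ∈ s, P i x) :
    ∃ U : Ultrafilter α, ∀ i, ∀ᶠ x in U, P i x := by
  let F := ⨅ s : Finset ι, 𝓟 {x | ∀ i ∈ s, P i x}
  have hF : F.NeBot := iInf_neBot_of_directed'
    (Antitone.directed_ge fun (s t : Finset ι) hst =>
      principal_mono.2 fun x hx i hi => hx i (Finset.mem_of_subset hst hi))
    fun s => principal_neBot_iff.2 (h s)
  refine ⟨.of F, fun i => of_le F (mem_iInf_of_mem {i} (mem_principal.2 ?_))⟩
  exact fun x hx => hx i (Finset.mem_singleton_self i)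

end Ultrafilter

theorem IsEtaOne.exists_forall_eventually_cmp_eq {L : Type*} [LinearOrder L] (h : IsEtaOne L)
    (U : Ultrafilter L) {P : Set L} (hP : P.Countable) :
    ∃ x, ∀ a ∈ P, ∀ᶠ y in U, cmp y a = cmp x a := by
  rcases U.le_cofinite_or_eq_pure with hU | ⟨z, rfl⟩
  swap
  · exact ⟨z, fun a _ => eventually_pure.2 rfl⟩
  have side (a : L) : (∀ᶠ y in U, y < a) ∨ ∀ᶠ y in U, a < y :=
    U.eventually_or.1 (mem_of_superset (hU (Set.finite_singleton a).compl_mem_cofinite)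
      fun y hy => Ne.lt_or_gt hy)
  obtain ⟨x, hxA, hxB⟩ := h {a ∈ P | ∀ᶠ y in U, a < y} {b ∈ P | ∀ᶠ y in U, y < b}
    (hP.mono (Set.sep_subset _ _)) (hP.mono (Set.sep_subset _ _))
    fun a ha b hb => (ha.2.and hb.2).exists.elim fun y hy => hy.1.trans hy.2
  refine ⟨x, fun a ha => ?_⟩
  rcases side a with hlt | hgt
  · filter_upwards [hlt] with y hy
    rw [(cmp_eq_lt_iff _ _).2 hy, (cmp_eq_lt_iff _ _).2 (hxB a ⟨ha, hlt⟩)]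
  · filter_upwards [hgt] with y hy
    rw [(cmp_eq_gt_iff _ _).2 hy, (cmp_eq_gt_iff _ _).2 (hxA a ⟨ha, hgt⟩)]

namespace FirstOrder.Language

theorem IsUltrahomogeneous.realize_formula_comp {L : Language} {M : Type*} [L.Structure M]
    (hM : L.IsUltrahomogeneous M) {S : L.Substructure M} (hS : S.FG) (f : S ↪[L] M)
    {σ : Type*} (ψ : L.Formula σ) (v : σ → S) :
    ψ.Realize (f ∘ v) ↔ ψ.Realize (((↑) : S → M) ∘ v) := by
  obtain ⟨g, rfl⟩ := hM S hS f
  exact StrongHomClass.realize_formula g ψ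

section order

variable {M : Type*} [LinearOrder M] [Language.order.Structure M]
  [Language.order.OrderedStructure M]

theorem exists_embedding_closure_range_of_cmp_eq {σ : Type*} {v w : σ → M}
    (h : ∀ i j, cmp (v i) (v j) = cmp (w i) (w j)) :
    ∃ f : Substructure.closure Language.order (Set.range v) ↪[Language.order] M,
      ∀ i, f ⟨v i, Substructure.subset_closure (Set.mem_range_self i)⟩ = w i := by
  let index (a : Substructure.closure Language.order (Set.range v)) : σ :=
    Set.rangeSplitting v ⟨a, (Substructure.mem_closure_iff_of_isRelational _ _ _).1 a.2⟩
  have v_index a : v (index a) = a := Set.apply_rangeSplitting v _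
  have hmono : StrictMono (w ∘ index) := fun a b hab =>
    (lt_iff_lt_of_cmp_eq_cmp (h _ _)).1 (by rwa [v_index, v_index])
  refine ⟨StrongHomClass.toEmbedding (OrderEmbedding.ofStrictMono _ hmono), fun i => ?_⟩
  change w (index _) = w i
  rw [← cmp_eq_eq_iff, ← h, v_index, cmp_self_eq_eq]

variable [M ⊨ Language.order.dlo] [Nonempty M]

theorem realize_iff_of_cmp_eq_of_countable [Countable M] {σ : Type*} [Finite σ]
    (ψ : Language.order.Formula σ) {v w : σ → M}
    (h : ∀ i j, cmp (v i) (v j) = cmp (w i) (w j)) :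
    ψ.Realize v ↔ ψ.Realize w := by
  obtain ⟨f, hf⟩ := exists_embedding_closure_range_of_cmp_eq h
  have := (isFraisseLimit_of_countable_nonempty_dlo M).ultrahomogeneous.realize_formula_comp
    (Substructure.fg_closure (Set.finite_range v)) f ψ
    fun i => ⟨v i, Substructure.subset_closure (Set.mem_range_self i)⟩
  rw [show (f ∘ _) = w from funext hf] at this
  exact this.symm

theorem realize_iff_of_cmp_eq_of_finite {σ : Type*} [Finite σ]
    (ψ : Language.order.Formula σ) {v w : σ → M}
    (h : ∀ i j, cmp (v i) (v j) = cmp (w i) (w j)) :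
    ψ.Realize v ↔ ψ.Realize w := by
  obtain ⟨S, hvw, hS⟩ := exists_elementarySubstructure_card_eq Language.order
    (Set.range v ∪ Set.range w) Cardinal.aleph0 le_rfl
    (Cardinal.lift_le.2
      ((Set.finite_range v).union (Set.finite_range w)).countable.le_aleph0)
    (by simp [order.card_eq_one])
    (Cardinal.lift_le.2 (Cardinal.aleph0_le_mk M))
  rw [Cardinal.lift_id, Cardinal.lift_aleph0] at hS
  have : Countable S := Cardinal.mk_le_aleph0_iff.1 hS.le
  have : Infinite S := Cardinal.infinite_iff.2 hS.ge
  have : Language.order.OrderedStructure S :=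
    inferInstanceAs (Language.order.OrderedStructure S.toSubstructure)
  let v' (i : σ) : S := ⟨v i, hvw (Or.inl ⟨i, rfl⟩)⟩
  let w' (i : σ) : S := ⟨w i, hvw (Or.inr ⟨i, rfl⟩)⟩
  calc ψ.Realize v ↔ ψ.Realize v' := S.subtype.map_formula ψ v'
    _ ↔ ψ.Realize w' := realize_iff_of_cmp_eq_of_countable ψ h
    _ ↔ ψ.Realize w := (S.subtype.map_formula ψ w').symm

theorem Formula.realize_iff_of_cmp_eq {α : Type*} [DecidableEq α]
    (φ : Language.order.Formula α) {v w : α → M}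
    (h : ∀ i ∈ φ.freeVarFinset, ∀ j ∈ φ.freeVarFinset,
      cmp (v i) (v j) = cmp (w i) (w j)) :
    φ.Realize v ↔ φ.Realize w := by
  have hs : ↑φ.freeVarFinset ⊆ (φ.freeVarFinset : Set α) := subset_rfl
  rw [Formula.Realize, Formula.Realize, ← BoundedFormula.realize_restrictFreeVar' hs,
    ← BoundedFormula.realize_restrictFreeVar' hs]
  exact realize_iff_of_cmp_eq_of_finite _ fun i j => h i i.2 j j.2

theorem Formula.realize_sumElim_iff_of_cmp_eq {β : Type*} [DecidableEq β]
    (φ : Language.order.Formula (β ⊕ Fin 1)) (p : β → M) {x y : M}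
    (h : ∀ a, Sum.inl a ∈ φ.freeVarFinset → cmp x (p a) = cmp y (p a)) :
    φ.Realize (Sum.elim p fun _ => x) ↔ φ.Realize (Sum.elim p fun _ => y) := by
  refine φ.realize_iff_of_cmp_eq ?_
  rintro (a | _) ha (b | _) hb
  · rfl
  · simp only [Sum.elim_inl, Sum.elim_inr]
    rw [← cmp_swap, h a ha, cmp_swap]
  · exact h b hb
  · simp

end order

end FirstOrder.Language

/-- A dense linear order without endpoints that is an `η₁`-set is a countably
saturated model of the theory of dense linear orders without endpoints. -/
theorem etaOne_countablySaturated (L : Type*) [LinearOrder L]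
    [DenselyOrdered L] [NoMinOrder L] [NoMaxOrder L] (h : IsEtaOne L) :
    letI := Language.orderStructure L
    L ⊨ Language.order.dlo ∧ CountablySaturated Language.order L := by
  let := Language.orderStructure L
  have : Language.order.OrderedStructure L := ⟨fun _ => Iff.rfl⟩
  refine ⟨inferInstance, fun p T _ hfin => ?_⟩
  classical
  obtain ⟨U, hU⟩ := Ultrafilter.exists_forall_eventually
    (fun φ x => φ ∈ T → φ.Realize (Sum.elim p fun _ => x)) fun s => by
      obtain ⟨x, hx⟩ := hfin (s.filter (· ∈ T)) fun φ hφ => (Finset.mem_filter.1 hφ).2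
      exact ⟨x, fun φ hφs hφT => hx φ (Finset.mem_filter.2 ⟨hφs, hφT⟩)⟩
  obtain ⟨x, hx⟩ := h.exists_forall_eventually_cmp_eq U (Set.countable_range p)
  have : Nonempty L := ⟨x⟩
  refine ⟨x, fun φ hφ => ?_⟩
  have hparams : {a | Sum.inl a ∈ φ.freeVarFinset}.Finite :=
    φ.freeVarFinset.finite_toSet.preimage Sum.inl_injective.injOn
  obtain ⟨y, hyφ, hy⟩ := ((hU φ).and (hparams.eventually_all.2 fun a _ =>
    hx (p a) (Set.mem_range_self a))).exists
  exact (φ.realize_sumElim_iff_of_cmp_eq p hy).1 (hyφ hφ)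
end

section
/- Two compact Hausdorff spaces X and Y are homeomorphic if there exist bases B and C for the closed sets of X and Y respectively, each forming a sublattice (under union and intersection) of the lattice of closed sets containing ∅ and the whole space, together with a lattice isomorphism between B and C. -/
/-!
Send `x ∈ X` to a point of `Y` lying in every `e b` with `x ∈ b`: these sets form a directed
family of nonempty closed sets, so they meet by compactness; do the same for `e.symm`.
If `y ∈ c → x ∈ e.symm c` for all `c ∈ C` and `x ∈ b → y' ∈ e b` for all `b ∈ B`, then every
basic closed set containing `y` contains `y'`, so `y' = y` in a T1 space. Hence the two maps
are mutually inverse, and they are continuous because the preimage of `c ∈ C` is `e.symm c`.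
-/

open Set Function

section

variable {X Y : Type*} {B : Set (Set X)} {C : Set (Set Y)}

/-- `y` lies in the intersection of the images under `e` of the members of `x⁺ = {b | x ∈ b}`. -/
def IsWallmanImage (e : B ≃o C) (x : X) (y : Y) : Prop :=
  ∀ b : B, x ∈ (b : Set X) → y ∈ (e b : Set Y)

lemma exists_mem_notMem_of_ne [TopologicalSpace X] [T1Space X]
    (hBbase : ∀ s : Set X, IsClosed s → ∃ T ⊆ B, s = ⋂₀ T) {x z : X} (h : z ≠ x) :
    ∃ b ∈ B, x ∈ b ∧ z ∉ b := by
  obtain ⟨T, hTB, hT⟩ := hBbase {x} isClosed_singleton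
  have hz : z ∉ ⋂₀ T := hT ▸ h
  obtain ⟨t, htT, hzt⟩ := not_forall₂.1 hz
  exact ⟨t, hTB htT, (hT ▸ mem_singleton x : x ∈ ⋂₀ T) t htT, hzt⟩

lemma continuous_of_isClosed_preimage_mem [TopologicalSpace X] [TopologicalSpace Y]
    (hCbase : ∀ s : Set Y, IsClosed s → ∃ T ⊆ C, s = ⋂₀ T) {f : X → Y}
    (hf : ∀ c ∈ C, IsClosed (f ⁻¹' c)) : Continuous f := by
  refine continuous_iff_isClosed.2 fun s hs => ?_
  obtain ⟨T, hTC, rfl⟩ := hCbase s hs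
  rw [preimage_sInter]
  exact isClosed_biInter fun t ht => hf t (hTC ht)

lemma directed_val_of_mem (hBinter : ∀ a ∈ B, ∀ b ∈ B, a ∩ b ∈ B) (x : X) :
    Directed (· ≥ ·) (fun b : {b : B // x ∈ (b : Set X)} => b.1) := fun b₁ b₂ =>
  ⟨⟨⟨_, hBinter _ b₁.1.2 _ b₂.1.2⟩, b₁.2, b₂.2⟩, inter_subset_left, inter_subset_right⟩

lemma nonempty_coe_apply (hBbot : ∅ ∈ B) (e : B ≃o C) {b : B} (hb : (b : Set X).Nonempty) :
    (e b : Set Y).Nonempty := by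
  rw [nonempty_iff_ne_empty] at hb ⊢
  refine fun h => hb (subset_empty_iff.1 (e.le_iff_le.1 ?_ : b ≤ ⟨∅, hBbot⟩))
  rw [← Subtype.coe_le_coe, h]
  exact empty_subset _

lemma exists_isWallmanImage [TopologicalSpace Y] [CompactSpace Y]
    (hCclosed : ∀ c ∈ C, IsClosed c) (hBbot : ∅ ∈ B) (hBtop : univ ∈ B)
    (hBinter : ∀ a ∈ B, ∀ b ∈ B, a ∩ b ∈ B) (e : B ≃o C) (x : X) :
    ∃ y, IsWallmanImage e x y := by
  have : Nonempty {b : B // x ∈ (b : Set X)} := ⟨⟨⟨univ, hBtop⟩, mem_univ x⟩⟩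
  obtain ⟨y, hy⟩ := IsCompact.nonempty_iInter_of_directed_nonempty_isCompact_isClosed
    (fun b : {b : B // x ∈ (b : Set X)} => (e b.1 : Set Y))
    ((directed_val_of_mem hBinter x).mono_comp _ (g := fun b : B => (e b : Set Y))
      fun _ _ h => e.monotone h)
    (fun b => nonempty_coe_apply hBbot e ⟨x, b.2⟩)
    (fun b => (hCclosed _ (e b.1).2).isCompact) (fun b => hCclosed _ (e b.1).2)
  exact ⟨y, fun b hb => mem_iInter.1 hy ⟨b, hb⟩⟩

lemma eq_of_isWallmanImage_symm [TopologicalSpace Y] [T1Space Y]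
    (hCbase : ∀ s : Set Y, IsClosed s → ∃ T ⊆ C, s = ⋂₀ T) {e : B ≃o C} {x : X} {y y' : Y}
    (h : IsWallmanImage e.symm y x) (h' : IsWallmanImage e x y') : y' = y := by
  by_contra hne
  obtain ⟨c, hcC, hyc, hy'c⟩ := exists_mem_notMem_of_ne hCbase hne
  have := h' _ (h ⟨c, hcC⟩ hyc)
  rw [e.apply_symm_apply] at this
  exact hy'c this

lemma preimage_eq_coe_symm_apply {e : B ≃o C} {f : X → Y} {g : Y → X}
    (hf : ∀ x, IsWallmanImage e x (f x)) (hg : ∀ y, IsWallmanImage e.symm y (g y))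
    (hgf : LeftInverse g f) (c : C) : f ⁻¹' c = e.symm c := by
  ext x
  refine ⟨fun hx => hgf x ▸ hg (f x) c hx, fun hx => ?_⟩
  have := hf x _ hx
  rwa [e.apply_symm_apply] at this

end

theorem homeomorph_of_latticeBase_orderIso_general
    (X Y : Type*) [TopologicalSpace X] [TopologicalSpace Y]
    [CompactSpace X] [T2Space X] [CompactSpace Y] [T2Space Y]
    (B : Set (Set X)) (C : Set (Set Y))
    (hBclosed : ∀ b ∈ B, IsClosed b) (hCclosed : ∀ c ∈ C, IsClosed c)
    (hBbot : ∅ ∈ B) (hBtop : Set.univ ∈ B)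
    (hCbot : ∅ ∈ C) (hCtop : Set.univ ∈ C)
    (hBinter : ∀ a ∈ B, ∀ b ∈ B, a ∩ b ∈ B)
    (hCinter : ∀ a ∈ C, ∀ b ∈ C, a ∩ b ∈ C)
    (hBbase : ∀ s : Set X, IsClosed s → ∃ T ⊆ B, s = ⋂₀ T)
    (hCbase : ∀ s : Set Y, IsClosed s → ∃ T ⊆ C, s = ⋂₀ T)
    (e : B ≃o C) :
    Nonempty (X ≃ₜ Y) := by
  choose f hf using exists_isWallmanImage hCclosed hBbot hBtop hBinter e
  choose g hg using exists_isWallmanImage hBclosed hCbot hCtop hCinter e.symm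
  have hgf : LeftInverse g f := fun x =>
    eq_of_isWallmanImage_symm hBbase (e := e.symm) (hf x) (hg (f x))
  have hfg : LeftInverse f g := fun y => eq_of_isWallmanImage_symm hCbase (hg y) (hf (g y))
  have hf_cont : Continuous f := continuous_of_isClosed_preimage_mem hCbase fun c hc => by
    rw [preimage_eq_coe_symm_apply hf hg hgf ⟨c, hc⟩]
    exact hBclosed _ (e.symm _).2
  have hg_cont : Continuous g := continuous_of_isClosed_preimage_mem hBbase fun b hb => by
    rw [preimage_eq_coe_symm_apply (e := e.symm) hg hf hfg ⟨b, hb⟩]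
    exact hCclosed _ (e _).2
  exact ⟨⟨⟨f, g, hgf, hfg⟩, hf_cont, hg_cont⟩⟩

/-- Wallman duality: two compact Hausdorff spaces with isomorphic lattice bases
for their closed sets are homeomorphic. Here `B` and `C` are bases for the
closed sets (every closed set is an intersection of members), closed under
finite unions and intersections and containing `∅` and the whole space, and
`e` is a lattice (equivalently, order) isomorphism between them. -/
theorem homeomorph_of_latticeBase_orderIso
    (X Y : Type*) [TopologicalSpace X] [TopologicalSpace Y]
    [CompactSpace X] [T2Space X] [CompactSpace Y] [T2Space Y]
    (B : Set (Set X)) (C : Set (Set Y))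
    (hBclosed : ∀ b ∈ B, IsClosed b) (hCclosed : ∀ c ∈ C, IsClosed c)
    (hBbot : ∅ ∈ B) (hBtop : Set.univ ∈ B)
    (hCbot : ∅ ∈ C) (hCtop : Set.univ ∈ C)
    (hBunion : ∀ a ∈ B, ∀ b ∈ B, a ∪ b ∈ B)
    (hBinter : ∀ a ∈ B, ∀ b ∈ B, a ∩ b ∈ B)
    (hCunion : ∀ a ∈ C, ∀ b ∈ C, a ∪ b ∈ C)
    (hCinter : ∀ a ∈ C, ∀ b ∈ C, a ∩ b ∈ C)
    (hBbase : ∀ s : Set X, IsClosed s → ∃ T ⊆ B, s = ⋂₀ T)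
    (hCbase : ∀ s : Set Y, IsClosed s → ∃ T ⊆ C, s = ⋂₀ T)
    (e : B ≃o C) :
    Nonempty (X ≃ₜ Y) :=
  homeomorph_of_latticeBase_orderIso_general X Y B C hBclosed hCclosed hBbot hBtop hCbot hCtop
    hBinter hCinter hBbase hCbase e
end

section
/- Let u be a free ultrafilter on ω and let I_u be the fiber of βq : β(ω×[0,1]) → βω over u. Define x ≤_u y on I_u by: every subcontinuum of I_u containing the bottom point 0_u and y also contains x. Then ≤_u is a preorder on I_u, and I_u is irreducible between its bottom point 0_u = u-lim⟨n,0⟩ and top point 1_u = u-lim⟨n,1⟩, i.e., no proper subcontinuum of I_u contains both 0_u and 1_u. -/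
open Filter

/-- `M = ω × [0,1]`, the topological sum of countably many unit intervals. -/
abbrev Miod : Type := ℕ × unitInterval

/-- The Stone–Čech extension `βq : βM → βω` of the projection `q : M → ω`,
where `βω` is identified with the space of ultrafilters on `ω`. -/
noncomputable def betaProj : StoneCech Miod → Ultrafilter ℕ :=
  stoneCechExtend
    (show Continuous fun p : Miod => (pure p.1 : Ultrafilter ℕ) from
      continuous_of_discreteTopology.comp continuous_fst)

lemma betaProj_unit (m : Miod) : betaProj (stoneCechUnit m) = pure m.1 := by
  unfold betaProj
  exact congrFun (stoneCechExtend_extends _) m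

/-- Existence of a "first crossing" point for a continuous function on `[0,1]`
that is small at the endpoints and large somewhere. -/
lemma exists_crossing (G : unitInterval → ℝ) (hG : Continuous G)
    (ht : ∃ t, 2/3 < G t) :
    ∃ l : unitInterval, 1/2 ≤ G l ∧ ∀ t : unitInterval, (t : ℝ) < (l : ℝ) → G t < 1/2 := by
  obtain ⟨t0, ht0⟩ := ht
  have hSc : IsClosed {t : unitInterval | 1/2 ≤ G t} := isClosed_le continuous_const hG
  have hScomp : IsCompact ((fun t : unitInterval => (t : ℝ)) '' {t | 1/2 ≤ G t}) :=
    (hSc.isCompact).image continuous_subtype_val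
  obtain ⟨c, hcmem, hlb⟩ := hScomp.exists_isLeast ⟨t0, ⟨t0, by simp; linarith, rfl⟩⟩
  obtain ⟨l, hlS, rfl⟩ := hcmem
  refine ⟨l, hlS, fun t htl => ?_⟩
  by_contra h
  push_neg at h
  exact absurd (hlb ⟨t, h, rfl⟩) (not_le.mpr htl)

theorem fiber_irreducible (u : Ultrafilter ℕ)
    (z0 z1 : StoneCech Miod)
    (h0 : Tendsto (fun n : ℕ => stoneCechUnit ((n, 0) : Miod)) ↑u (nhds z0))
    (h1 : Tendsto (fun n : ℕ => stoneCechUnit ((n, 1) : Miod)) ↑u (nhds z1))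
    (K : Set (StoneCech Miod)) (hKI : K ⊆ betaProj ⁻¹' {u}) (hKc : IsCompact K)
    (hKpc : IsPreconnected K) (hK0 : z0 ∈ K) (hK1 : z1 ∈ K) :
    K = betaProj ⁻¹' {u} := by
  refine Set.Subset.antisymm hKI ?_
  by_contra hns
  obtain ⟨x, hxI, hxK⟩ := Set.not_subset.mp hns
  have hxI' : betaProj x = u := hxI
  -- Urysohn separation of K from x in βM
  obtain ⟨F, hF0, hF1, hF01⟩ :=
    exists_continuous_zero_one_of_isClosed hKc.isClosed (isClosed_singleton (x := x))
      (Set.disjoint_singleton_right.mpr hxK)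
  set g : Miod → ℝ := fun m => F (stoneCechUnit m) with hg_def
  have hg : Continuous g := F.continuous.comp continuous_stoneCechUnit
  have hFz0 : F z0 = 0 := hF0 hK0
  have hFz1 : F z1 = 0 := hF0 hK1
  have hFx : F x = 1 := hF1 rfl
  -- the three u-large sets
  have hA0 : {n : ℕ | g (n, 0) < 1/3} ∈ u := by
    have h := (F.continuous.tendsto z0).comp h0
    rw [hFz0] at h
    exact h.eventually_lt_const (by norm_num)
  have hA1 : {n : ℕ | g (n, 1) < 1/3} ∈ u := by
    have h := (F.continuous.tendsto z1).comp h1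
    rw [hFz1] at h
    exact h.eventually_lt_const (by norm_num)
  have hT : {n : ℕ | ∃ t : unitInterval, 2/3 < g (n, t)} ∈ u := by
    by_contra hTc
    have hS : {n : ℕ | ∃ t : unitInterval, 2/3 < g (n, t)}ᶜ ∈ u :=
      Ultrafilter.compl_mem_iff_notMem.mpr hTc
    set O : Set (StoneCech Miod) :=
      (fun z => F z) ⁻¹' Set.Ioi (2/3 : ℝ) ∩
        betaProj ⁻¹' {v : Ultrafilter ℕ | {n : ℕ | ∃ t : unitInterval, 2/3 < g (n, t)}ᶜ ∈ v}
      with hO_def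
    have hO : IsOpen O :=
      (isOpen_Ioi.preimage F.continuous).inter
        ((ultrafilter_isOpen_basic _).preimage (continuous_stoneCechExtend _))
    have hxO : x ∈ O := by
      constructor
      · simp only [Set.mem_preimage, hFx, Set.mem_Ioi]; norm_num
      · simp only [Set.mem_preimage, hxI', Set.mem_setOf_eq]; exact hS
    obtain ⟨m, hm⟩ := denseRange_stoneCechUnit.exists_mem_open hO ⟨x, hxO⟩
    have hm1 : 2/3 < g m := hm.1
    have hm2 : m.1 ∈ {n : ℕ | ∃ t : unitInterval, 2/3 < g (n, t)}ᶜ := by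
      have := hm.2
      rw [Set.mem_preimage, betaProj_unit] at this
      exact this
    exact hm2 ⟨m.2, hm1⟩
  set D : Set ℕ := {n : ℕ | g (n, 0) < 1/3} ∩ {n : ℕ | g (n, 1) < 1/3} ∩
      {n : ℕ | ∃ t : unitInterval, 2/3 < g (n, t)} with hD_def
  have hD : D ∈ u := Filter.inter_mem (Filter.inter_mem hA0 hA1) hT
  -- first crossing points
  have hch : ∀ n : ℕ, ∃ l : unitInterval,
      n ∈ D → (1/2 ≤ g (n, l) ∧ ∀ t : unitInterval, (t : ℝ) < (l : ℝ) → g (n, t) < 1/2) := by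
    intro n
    by_cases hn : n ∈ D
    · obtain ⟨l, hl1, hl2⟩ := exists_crossing (fun t => g (n, t))
        (hg.comp (Continuous.prodMk_right n)) hn.2
      exact ⟨l, fun _ => ⟨hl1, hl2⟩⟩
    · exact ⟨0, fun h => absurd h hn⟩
  choose l hl using hch
  -- the two separated closed sets in M
  set C0 : Set Miod := {m : Miod | m.1 ∈ D ∧ (m.2 : ℝ) ≤ (l m.1 : ℝ)} with hC0_def
  set C1 : Set Miod := {m : Miod | m.1 ∈ D ∧ (l m.1 : ℝ) ≤ (m.2 : ℝ) ∧ g m ≤ 1/3} with hC1_def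
  have hDclosed : IsClosed {m : Miod | m.1 ∈ D} :=
    (isClosed_discrete D).preimage continuous_fst
  have hlcont : Continuous fun m : Miod => (l m.1 : ℝ) :=
    continuous_subtype_val.comp (continuous_of_discreteTopology.comp continuous_fst)
  have hsndcont : Continuous fun m : Miod => (m.2 : ℝ) :=
    continuous_subtype_val.comp continuous_snd
  have hC0closed : IsClosed C0 := hDclosed.inter (isClosed_le hsndcont hlcont)
  have hC1closed : IsClosed C1 :=
    hDclosed.inter ((isClosed_le hlcont hsndcont).inter (isClosed_le hg continuous_const))
  have hdisj : Disjoint C0 C1 := by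
    rw [Set.disjoint_left]
    rintro m ⟨hmD, hm0⟩ ⟨-, hm1, hm2⟩
    have heq : m.2 = l m.1 := Subtype.ext (le_antisymm hm0 hm1)
    have hmg : m = (m.1, l m.1) := by rw [← heq]
    have := (hl m.1 hmD).1
    rw [← hmg] at this
    linarith
  -- Urysohn in M
  obtain ⟨φ, hφ0, hφ1, hφ01⟩ := exists_continuous_zero_one_of_isClosed hC0closed hC1closed hdisj
  set φ' : Miod → Set.Icc (0 : ℝ) 1 := fun m => ⟨φ m, hφ01 m⟩ with hφ'_def
  have hφ'c : Continuous φ' := φ.continuous.subtype_mk _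
  set Φ : StoneCech Miod → Set.Icc (0 : ℝ) 1 := stoneCechExtend hφ'c with hΦ_def
  have hΦc : Continuous Φ := continuous_stoneCechExtend hφ'c
  set Φr : StoneCech Miod → ℝ := fun z => ((Φ z : Set.Icc (0 : ℝ) 1) : ℝ) with hΦr_def
  have hΦrc : Continuous Φr := continuous_subtype_val.comp hΦc
  have hΦunit : ∀ m : Miod, Φr (stoneCechUnit m) = φ m := fun m =>
    congrArg Subtype.val (congrFun (stoneCechExtend_extends hφ'c) m)
  -- values of Φr on z0, z1
  have hΦz0 : Φr z0 = 0 := by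
    have htd : Tendsto (fun n : ℕ => Φr (stoneCechUnit ((n, 0) : Miod))) ↑u (nhds (Φr z0)) :=
      (hΦrc.tendsto z0).comp h0
    have heq : ∀ᶠ n : ℕ in ↑u, Φr (stoneCechUnit ((n, 0) : Miod)) = 0 := by
      filter_upwards [hD] with n hn
      rw [hΦunit]
      exact hφ0 ⟨hn, by exact_mod_cast (l n).2.1⟩
    exact tendsto_nhds_unique (htd.congr' heq) tendsto_const_nhds
  have hΦz1 : Φr z1 = 1 := by
    have htd : Tendsto (fun n : ℕ => Φr (stoneCechUnit ((n, 1) : Miod))) ↑u (nhds (Φr z1)) :=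
      (hΦrc.tendsto z1).comp h1
    have heq : ∀ᶠ n : ℕ in ↑u, Φr (stoneCechUnit ((n, 1) : Miod)) = 1 := by
      filter_upwards [hD] with n hn
      rw [hΦunit]
      exact hφ1 ⟨hn, by exact_mod_cast (l n).2.2, le_of_lt hn.1.2⟩
    exact tendsto_nhds_unique (htd.congr' heq) tendsto_const_nhds
  -- separating open sets
  set U0 : Set (StoneCech Miod) := Φr ⁻¹' Set.Iio (1/2 : ℝ) with hU0_def
  set U1 : Set (StoneCech Miod) := Φr ⁻¹' Set.Ioi (1/2 : ℝ) with hU1_def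
  have hU0open : IsOpen U0 := isOpen_Iio.preimage hΦrc
  have hU1open : IsOpen U1 := isOpen_Ioi.preimage hΦrc
  -- K is covered by U0 ∪ U1
  have hKO : K ⊆ (fun z => F z) ⁻¹' Set.Iio (1/3 : ℝ) ∩
      betaProj ⁻¹' {v : Ultrafilter ℕ | D ∈ v} := by
    intro k hk
    refine ⟨?_, ?_⟩
    · simp only [Set.mem_preimage, hF0 hk, Set.mem_Iio]; norm_num
    · have : betaProj k = u := hKI hk
      simp only [Set.mem_preimage, this, Set.mem_setOf_eq]
      exact hD
  have hOopen : IsOpen ((fun z => F z) ⁻¹' Set.Iio (1/3 : ℝ) ∩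
      betaProj ⁻¹' {v : Ultrafilter ℕ | D ∈ v}) :=
    (isOpen_Iio.preimage F.continuous).inter
      ((ultrafilter_isOpen_basic _).preimage (continuous_stoneCechExtend _))
  have hOC : ((fun z => F z) ⁻¹' Set.Iio (1/3 : ℝ) ∩ betaProj ⁻¹' {v : Ultrafilter ℕ | D ∈ v})
      ∩ Set.range (stoneCechUnit : Miod → StoneCech Miod)
      ⊆ stoneCechUnit '' C0 ∪ stoneCechUnit '' C1 := by
    rintro z ⟨⟨hz1, hz2⟩, m, rfl⟩
    have hgm : g m < 1/3 := hz1
    have hmD : m.1 ∈ D := by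
      rw [Set.mem_preimage, betaProj_unit] at hz2
      exact hz2
    rcases le_total ((m.2 : ℝ)) ((l m.1 : ℝ)) with h | h
    · exact Or.inl ⟨m, ⟨hmD, h⟩, rfl⟩
    · exact Or.inr ⟨m, ⟨hmD, h, le_of_lt hgm⟩, rfl⟩
  have hclC0 : closure (stoneCechUnit '' C0) ⊆ U0 := by
    have heqon : Set.EqOn Φr (fun _ => (0 : ℝ)) (stoneCechUnit '' C0) := by
      rintro z ⟨m, hm, rfl⟩
      rw [hΦunit]
      exact hφ0 hm
    intro z hz
    have := heqon.closure hΦrc continuous_const hz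
    simp only [Set.mem_preimage, Set.mem_Iio, hU0_def]
    rw [this]; norm_num
  have hclC1 : closure (stoneCechUnit '' C1) ⊆ U1 := by
    have heqon : Set.EqOn Φr (fun _ => (1 : ℝ)) (stoneCechUnit '' C1) := by
      rintro z ⟨m, hm, rfl⟩
      rw [hΦunit]
      exact hφ1 hm
    intro z hz
    have := heqon.closure hΦrc continuous_const hz
    simp only [Set.mem_preimage, Set.mem_Ioi, hU1_def]
    rw [this]; norm_num
  have hKU : K ⊆ U0 ∪ U1 := by
    intro k hk
    have hkO := hKO hk
    have hkcl : k ∈ closure (((fun z => F z) ⁻¹' Set.Iio (1/3 : ℝ) ∩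
        betaProj ⁻¹' {v : Ultrafilter ℕ | D ∈ v}) ∩ Set.range stoneCechUnit) :=
      (denseRange_stoneCechUnit.open_subset_closure_inter hOopen) hkO
    have : k ∈ closure (stoneCechUnit '' C0 ∪ stoneCechUnit '' C1) :=
      closure_mono hOC hkcl
    rw [closure_union] at this
    rcases this with h | h
    · exact Or.inl (hclC0 h)
    · exact Or.inr (hclC1 h)
  -- contradiction with connectedness
  have hz0U0 : z0 ∈ K ∩ U0 := ⟨hK0, by simp only [hU0_def, Set.mem_preimage, Set.mem_Iio, hΦz0]; norm_num⟩
  have hz1U1 : z1 ∈ K ∩ U1 := ⟨hK1, by simp only [hU1_def, Set.mem_preimage, Set.mem_Ioi, hΦz1]; norm_num⟩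
  obtain ⟨w, -, hw0, hw1⟩ := hKpc U0 U1 hU0open hU1open hKU ⟨z0, hz0U0⟩ ⟨z1, hz1U1⟩
  have hw0' : Φr w < 1/2 := hw0
  have hw1' : 1/2 < Φr w := hw1
  linarith

/-- For a free ultrafilter `u` on `ω`, with `I_u` the fiber of `βq` over `u`,
`0_u = u-lim⟨n,0⟩` and `1_u = u-lim⟨n,1⟩`: the relation `x ≤_u y` ("every
subcontinuum of `I_u` containing `0_u` and `y` contains `x`") is a preorder on
`I_u`, and `I_u` is irreducible between `0_u` and `1_u`: no proper
subcontinuum of `I_u` contains both. -/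
theorem fiber_preorder_and_irreducible (u : Ultrafilter ℕ)
    (hu : ∀ n : ℕ, u ≠ pure n)
    (z0 z1 : StoneCech Miod)
    (h0 : Tendsto (fun n : ℕ => stoneCechUnit ((n, 0) : Miod)) ↑u (nhds z0))
    (h1 : Tendsto (fun n : ℕ => stoneCechUnit ((n, 1) : Miod)) ↑u (nhds z1)) :
    letI Iu : Set (StoneCech Miod) := betaProj ⁻¹' {u}
    letI le : StoneCech Miod → StoneCech Miod → Prop := fun x y =>
      ∀ K : Set (StoneCech Miod), K ⊆ Iu → IsCompact K → IsPreconnected K →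
        K.Nonempty → z0 ∈ K → y ∈ K → x ∈ K
    (∀ x ∈ Iu, le x x) ∧
    (∀ x ∈ Iu, ∀ y ∈ Iu, ∀ z ∈ Iu, le x y → le y z → le x z) ∧
    (∀ K : Set (StoneCech Miod), K ⊆ Iu → IsCompact K → IsPreconnected K →
      K.Nonempty → z0 ∈ K → z1 ∈ K → K = Iu) := by
  refine ⟨?_, ?_, ?_⟩
  · intro x _ K _ _ _ _ _ hxK
    exact hxK
  · intro x _ y _ z _ hxy hyz K hs hc hp hn h0K hzK
    exact hxy K hs hc hp hn h0K (hyz K hs hc hp hn h0K hzK)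
  · intro K hKI hKc hKpc _ hK0 hK1
    exact fiber_irreducible u z0 z1 h0 h1 K hKI hKc hKpc hK0 hK1
end
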